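/- Let G be a connected graph on n vertices with adjacency eigenvalues λ₁ ≥ ⋯ ≥ λₙ, λ = max{|λ₂|,|λₙ|}, and normalized Perron eigenvector ν with minimum entry ν_min. Then the vertex integrity satisfies ι(G) ≥ n(1 − 2λ/(n(λ + λ₁)ν_min²)). -/

import Mathlib

open Matrix Finset

/-- The largest size of a connected component of the subgraph of `G` induced on the
complement of `S` (`0` if `S` is the whole vertex set). -/
noncomputable def maxCompSize {n : ℕ} (G : SimpleGraph (Fin n)) (S : Finset (Fin n)) : ℕ :=
  sSup {k | ∃ v : {x : Fin n | x ∉ S},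
    k = Nat.card {w : {x : Fin n | x ∉ S} // (G.induce {x : Fin n | x ∉ S}).Reachable v w}}

/-- The vertex integrity `ι(G) = min_{S ⊆ V} (|S| + κ(G − S))`. -/
noncomputable def vertexIntegrity {n : ℕ} (G : SimpleGraph (Fin n)) : ℕ :=
  sInf {m | ∃ S : Finset (Fin n), m = S.card + maxCompSize G S}

/-!
Removing a vertex set `S` leaves components of size at most `κ = κ(G − S)`; grouping them greedily
splits `V ∖ S` into two parts `X`, `Y` with no edges between them, each of size at least
`(n - |S| - κ) / 2`. The expander mixing lemma taken relative to the Perron vector `ν` gives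
`λ₁ p q ≤ λ √((|X| - p²) (|Y| - q²))` for `p = ∑_X ν`, `q = ∑_Y ν`, and since
`p q ≥ |X| |Y| ν_min²` this forces `min (|X|, |Y|) ≤ √(|X| |Y|) ≤ λ / ((λ + λ₁) ν_min²)`.
Hence `|S| + κ ≥ n - 2 λ / ((λ + λ₁) ν_min²)` for every `S`.
-/

lemma Real.min_le_sqrt_mul {a b : ℝ} (ha : 0 ≤ a) (hb : 0 ≤ b) : min a b ≤ √(a * b) :=
  Real.le_sqrt_of_sq_le (by
    rw [sq]
    exact mul_le_mul (min_le_left a b) (min_le_right a b) (le_min ha hb) ha)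

lemma Real.sqrt_sub_sq_mul_sqrt_sub_sq_add_mul_le {a b p q : ℝ} (hpa : p ^ 2 ≤ a)
    (hqb : q ^ 2 ≤ b) : √(a - p ^ 2) * √(b - q ^ 2) + p * q ≤ √a * √b := by
  rw [← Real.sqrt_mul (by nlinarith [sq_nonneg p]) b]
  apply Real.le_sqrt_of_sq_le
  set s := √(a - p ^ 2)
  set t := √(b - q ^ 2)
  have hs : a = s ^ 2 + p ^ 2 := by rw [Real.sq_sqrt (by linarith)]; ring
  have ht : b = t ^ 2 + q ^ 2 := by rw [Real.sq_sqrt (by linarith)]; ring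
  rw [hs, ht]
  -- Cauchy–Schwarz in the plane for `(s, p)` and `(t, q)`
  nlinarith [sq_nonneg (s * q - t * p)]

lemma abs_le_max_abs_of_antitone {n : ℕ} {lam : Fin n → ℝ} (hmono : Antitone lam) {j : Fin n}
    (hj : 0 < j.val) :
    |lam j| ≤ max |lam ⟨1, Nat.lt_of_le_of_lt hj j.isLt⟩|
      |lam ⟨n - 1, Nat.sub_lt (Nat.lt_trans hj j.isLt) one_pos⟩| := by
  rw [max_comm]
  exact abs_le_max_abs_abs (hmono (Fin.le_def.mpr (Nat.le_sub_one_of_lt j.isLt)))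
    (hmono (Fin.le_def.mpr hj))

lemma Finset.indicator_one_dotProduct {ι : Type*} [Fintype ι] (s : Finset ι) (w : ι → ℝ) :
    (s : Set ι).indicator 1 ⬝ᵥ w = ∑ i ∈ s, w i := by
  classical
  simp [dotProduct, Set.indicator_apply]

namespace Matrix.IsHermitian

variable {ι : Type*} [Fintype ι] {A : Matrix ι ι ℝ}

lemma dotProduct_mulVec_comm (hA : A.IsHermitian) (x y : ι → ℝ) :
    x ⬝ᵥ (A *ᵥ y) = (A *ᵥ x) ⬝ᵥ y := by
  rw [dotProduct_mulVec, ← mulVec_transpose, ← conjTranspose_eq_transpose_of_trivial, hA.eq]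

variable [DecidableEq ι] (hA : A.IsHermitian)

lemma dotProduct_eigenvectorBasis_mulVec (i : ι) (x : ι → ℝ) :
    ⇑(hA.eigenvectorBasis i) ⬝ᵥ (A *ᵥ x) =
      hA.eigenvalues i * (⇑(hA.eigenvectorBasis i) ⬝ᵥ x) := by
  rw [hA.dotProduct_mulVec_comm, hA.mulVec_eigenvectorBasis, smul_dotProduct, smul_eq_mul]

lemma sum_dotProduct_eigenvectorBasis_mul (x y : ι → ℝ) :
    ∑ i, (x ⬝ᵥ ⇑(hA.eigenvectorBasis i)) * (⇑(hA.eigenvectorBasis i) ⬝ᵥ y) = x ⬝ᵥ y := by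
  simpa [EuclideanSpace.inner_eq_star_dotProduct, dotProduct_comm] using
    hA.eigenvectorBasis.sum_inner_mul_inner (WithLp.toLp 2 x) (WithLp.toLp 2 y)

lemma abs_dotProduct_mulVec_le {L : ℝ} (hL : 0 ≤ L) {u : ι → ℝ}
    (hu : ∀ i, |hA.eigenvalues i| ≤ L ∨ ⇑(hA.eigenvectorBasis i) ⬝ᵥ u = 0) (v : ι → ℝ) :
    |u ⬝ᵥ (A *ᵥ v)| ≤ L * √(u ⬝ᵥ u) * √(v ⬝ᵥ v) := by
  set c : ι → ℝ := fun i ↦ u ⬝ᵥ ⇑(hA.eigenvectorBasis i)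
  set d : ι → ℝ := fun i ↦ ⇑(hA.eigenvectorBasis i) ⬝ᵥ v
  have hc : ∑ i, |c i| ^ 2 = u ⬝ᵥ u := by
    simp only [sq_abs]
    simpa only [sq, c, dotProduct_comm u] using hA.sum_dotProduct_eigenvectorBasis_mul u u
  have hd : ∑ i, |d i| ^ 2 = v ⬝ᵥ v := by
    simp only [sq_abs]
    simpa only [sq, d, dotProduct_comm _ v] using hA.sum_dotProduct_eigenvectorBasis_mul v v
  have hterm : ∀ i, |c i * (hA.eigenvalues i * d i)| ≤ L * (|c i| * |d i|) := by
    intro i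
    rcases hu i with hi | hi
    · rw [abs_mul, abs_mul, mul_left_comm]
      exact mul_le_mul_of_nonneg_right hi (by positivity)
    · simp [c, dotProduct_comm u, hi]
  calc |u ⬝ᵥ (A *ᵥ v)| = |∑ i, c i * (hA.eigenvalues i * d i)| := by
        simp only [c, d, ← hA.dotProduct_eigenvectorBasis_mulVec,
          hA.sum_dotProduct_eigenvectorBasis_mul]
    _ ≤ ∑ i, L * (|c i| * |d i|) := (abs_sum_le_sum_abs _ _).trans (sum_le_sum fun i _ ↦ hterm i)
    _ ≤ L * (√(∑ i, |c i| ^ 2) * √(∑ i, |d i| ^ 2)) := by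
        rw [← mul_sum]
        exact mul_le_mul_of_nonneg_left (Real.sum_mul_le_sqrt_mul_sqrt _ _ _) hL
    _ = L * √(u ⬝ᵥ u) * √(v ⬝ᵥ v) := by rw [hc, hd, mul_assoc]

lemma eigenvectorBasis_dotProduct_eq_zero_of_orthogonal {ν : ι → ℝ} {μ : ℝ}
    (hν : A *ᵥ ν = μ • ν) (hν0 : ν ≠ 0) {i₀ : ι} (hi₀ : ∀ i ≠ i₀, hA.eigenvalues i ≠ μ)
    {u : ι → ℝ} (hu : u ⬝ᵥ ν = 0) : ⇑(hA.eigenvectorBasis i₀) ⬝ᵥ u = 0 := by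
  have hcoeff : ∀ i ≠ i₀, ⇑(hA.eigenvectorBasis i) ⬝ᵥ ν = 0 := by
    intro i hi
    have h := hA.dotProduct_eigenvectorBasis_mulVec i ν
    rw [hν, dotProduct_smul, smul_eq_mul] at h
    exact (mul_eq_zero.mp (by linarith : (hA.eigenvalues i - μ) * _ = 0)).resolve_left
      (sub_ne_zero.mpr (hi₀ i hi))
  have hexpand : ∀ x,
      x ⬝ᵥ ν = (x ⬝ᵥ ⇑(hA.eigenvectorBasis i₀)) * (⇑(hA.eigenvectorBasis i₀) ⬝ᵥ ν) :=
    fun x ↦ by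
      rw [← hA.sum_dotProduct_eigenvectorBasis_mul, sum_eq_single i₀
        (fun i _ hi ↦ by rw [hcoeff i hi, mul_zero]) (by simp)]
  have hν₀ : ⇑(hA.eigenvectorBasis i₀) ⬝ᵥ ν ≠ 0 := fun h ↦ by
    have := hexpand ν
    rw [h, mul_zero] at this
    exact hν0 (dotProduct_self_eq_zero.mp this)
  rw [dotProduct_comm]
  exact (mul_eq_zero.mp ((hexpand u).symm.trans hu)).resolve_right hν₀

lemma abs_dotProduct_mulVec_le_of_orthogonal {L μ : ℝ} (hL : 0 ≤ L) {ν : ι → ℝ}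
    (hν : A *ᵥ ν = μ • ν) (hν0 : ν ≠ 0) {i₀ : ι} (hi₀ : hA.eigenvalues i₀ = μ)
    (hgap : ∀ i ≠ i₀, |hA.eigenvalues i| ≤ L) {u : ι → ℝ} (hu : u ⬝ᵥ ν = 0) (v : ι → ℝ) :
    |u ⬝ᵥ (A *ᵥ v)| ≤ L * √(u ⬝ᵥ u) * √(v ⬝ᵥ v) := by
  refine hA.abs_dotProduct_mulVec_le hL (fun i ↦ ?_) v
  by_cases hi : i = i₀
  · subst hi
    by_cases hμL : |μ| ≤ L
    · exact .inl (hi₀ ▸ hμL)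
    · exact .inr (hA.eigenvectorBasis_dotProduct_eq_zero_of_orthogonal hν hν0
        (fun k hk hkμ ↦ hμL (hkμ ▸ hgap k hk)) hu)
  · exact .inl (hgap i hi)

/-- The expander mixing lemma, with the eigenvector `ν` in the role of the constant vector. -/
lemma abs_dotProduct_mulVec_sub_le {L μ : ℝ} (hL : 0 ≤ L) {ν : ι → ℝ}
    (hν : A *ᵥ ν = μ • ν) (hν1 : ν ⬝ᵥ ν = 1) {i₀ : ι} (hi₀ : hA.eigenvalues i₀ = μ)
    (hgap : ∀ i ≠ i₀, |hA.eigenvalues i| ≤ L) (x y : ι → ℝ) :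
    |x ⬝ᵥ (A *ᵥ y) - μ * (x ⬝ᵥ ν) * (y ⬝ᵥ ν)| ≤
      L * √(x ⬝ᵥ x - (x ⬝ᵥ ν) ^ 2) * √(y ⬝ᵥ y - (y ⬝ᵥ ν) ^ 2) := by
  have hν0 : ν ≠ 0 := by rintro rfl; simp at hν1
  set u := x - (x ⬝ᵥ ν) • ν
  set v := y - (y ⬝ᵥ ν) • ν
  have hu : u ⬝ᵥ ν = 0 := by simp [u, sub_dotProduct, hν1]
  have huu : u ⬝ᵥ u = x ⬝ᵥ x - (x ⬝ᵥ ν) ^ 2 := by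
    simp only [u, sub_dotProduct, dotProduct_sub, smul_dotProduct, dotProduct_smul, hν1,
      dotProduct_comm ν x, smul_eq_mul]; ring
  have hvv : v ⬝ᵥ v = y ⬝ᵥ y - (y ⬝ᵥ ν) ^ 2 := by
    simp only [v, sub_dotProduct, dotProduct_sub, smul_dotProduct, dotProduct_smul, hν1,
      dotProduct_comm ν y, smul_eq_mul]; ring
  have huv : u ⬝ᵥ (A *ᵥ v) = x ⬝ᵥ (A *ᵥ y) - μ * (x ⬝ᵥ ν) * (y ⬝ᵥ ν) := by
    calc u ⬝ᵥ (A *ᵥ v) = u ⬝ᵥ (A *ᵥ y) := by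
          simp [v, mulVec_sub, mulVec_smul, hν, dotProduct_sub, hu]
      _ = x ⬝ᵥ (A *ᵥ y) - (x ⬝ᵥ ν) * (ν ⬝ᵥ (A *ᵥ y)) := by
          simp [u, sub_dotProduct, smul_dotProduct]
      _ = x ⬝ᵥ (A *ᵥ y) - μ * (x ⬝ᵥ ν) * (y ⬝ᵥ ν) := by
          rw [hA.dotProduct_mulVec_comm ν, hν, smul_dotProduct, smul_eq_mul, dotProduct_comm ν y]
          ring
  rw [← huv, ← huu, ← hvv]
  exact hA.abs_dotProduct_mulVec_le_of_orthogonal hL hν hν0 hi₀ hgap hu v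

lemma abs_sum_sum_sub_le {L μ : ℝ} (hL : 0 ≤ L) {ν : ι → ℝ} (hν : A *ᵥ ν = μ • ν)
    (hν1 : ν ⬝ᵥ ν = 1) {i₀ : ι} (hi₀ : hA.eigenvalues i₀ = μ)
    (hgap : ∀ i ≠ i₀, |hA.eigenvalues i| ≤ L) (X Y : Finset ι) :
    |∑ i ∈ X, ∑ j ∈ Y, A i j - μ * (∑ i ∈ X, ν i) * (∑ j ∈ Y, ν j)| ≤
      L * √(#X - (∑ i ∈ X, ν i) ^ 2) * √(#Y - (∑ j ∈ Y, ν j) ^ 2) := by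
  set x : ι → ℝ := (X : Set ι).indicator 1
  set y : ι → ℝ := (Y : Set ι).indicator 1
  have hx : ∀ w, x ⬝ᵥ w = ∑ i ∈ X, w i := X.indicator_one_dotProduct
  have hy : ∀ w, y ⬝ᵥ w = ∑ j ∈ Y, w j := Y.indicator_one_dotProduct
  have hxx : x ⬝ᵥ x = #X := by rw [hx, sum_indicator_subset _ subset_rfl]; simp
  have hyy : y ⬝ᵥ y = #Y := by rw [hy, sum_indicator_subset _ subset_rfl]; simp
  have hxAy : x ⬝ᵥ (A *ᵥ y) = ∑ i ∈ X, ∑ j ∈ Y, A i j := by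
    rw [hx]
    exact sum_congr rfl fun i _ ↦ by rw [mulVec, dotProduct_comm, hy]
  have hmix := hA.abs_dotProduct_mulVec_sub_le hL hν hν1 hi₀ hgap x y
  rwa [hxAy, hxx, hyy, hx, hy] at hmix

lemma sqrt_card_mul_card_le_of_block_eq_zero {L μ c : ℝ} (hL : 0 ≤ L) (hμ : 0 < μ) (hc : 0 < c)
    {ν : ι → ℝ} (hν : A *ᵥ ν = μ • ν) (hν1 : ν ⬝ᵥ ν = 1) (hνc : ∀ i, c ≤ ν i) {i₀ : ι}
    (hi₀ : hA.eigenvalues i₀ = μ) (hgap : ∀ i ≠ i₀, |hA.eigenvalues i| ≤ L)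
    {X Y : Finset ι} (hXY : ∀ i ∈ X, ∀ j ∈ Y, A i j = 0) :
    √((#X : ℝ) * #Y) ≤ L / ((L + μ) * c ^ 2) := by
  have hmix := hA.abs_sum_sum_sub_le hL hν hν1 hi₀ hgap X Y
  rw [sum_eq_zero fun i hi ↦ sum_eq_zero fun j hj ↦ hXY i hi j hj, zero_sub, abs_neg] at hmix
  have hsq : ∀ s : Finset ι, (∑ i ∈ s, ν i) ^ 2 ≤ #s := fun s ↦
    sq_sum_le_card_mul_sum_sq.trans (mul_le_of_le_one_right (Nat.cast_nonneg _)
      ((sum_le_univ_sum_of_nonneg fun i ↦ sq_nonneg (ν i)).trans_eq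
        (by simpa only [dotProduct, sq] using hν1)))
  have hcard : ∀ s : Finset ι, #s * c ≤ ∑ i ∈ s, ν i := fun s ↦ by
    rw [← nsmul_eq_mul]
    exact card_nsmul_le_sum _ _ _ fun i _ ↦ hνc i
  have hpq := Real.sqrt_sub_sq_mul_sqrt_sub_sq_add_mul_le (hsq X) (hsq Y)
  -- with `p = ∑ X ν`, `q = ∑ Y ν`: `μ p q ≤ L (√(|X| |Y|) - p q)` and `p q ≥ |X| |Y| c²`
  have key : (L + μ) * c ^ 2 * (#X * #Y) ≤ L * √((#X : ℝ) * #Y) := by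
    rw [Real.sqrt_mul (Nat.cast_nonneg _)]
    nlinarith [le_abs_self (μ * (∑ i ∈ X, ν i) * (∑ j ∈ Y, ν j)),
      mul_le_mul (hcard X) (hcard Y) (by positivity) (by nlinarith [hcard X])]
  rcases (Real.sqrt_nonneg ((#X : ℝ) * #Y)).eq_or_lt with h0 | hpos
  · rw [← h0]; positivity
  have hsqrt := Real.mul_self_sqrt (by positivity : (0 : ℝ) ≤ #X * #Y)
  rw [le_div_iff₀ (by positivity)]
  refine le_of_mul_le_mul_right ?_ hpos
  calc _ = (L + μ) * c ^ 2 * (#X * #Y) := by linear_combination (L + μ) * c ^ 2 * hsqrt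
    _ ≤ _ := key

end Matrix.IsHermitian

lemma Finset.exists_subset_sum_balanced {α : Type*} [DecidableEq α] (s : Finset α) (f : α → ℕ)
    {κ : ℕ} (hf : ∀ a ∈ s, f a ≤ κ) :
    ∃ T ⊆ s, ∑ a ∈ s, f a ≤ 2 * ∑ a ∈ T, f a + κ ∧ 2 * ∑ a ∈ T, f a ≤ ∑ a ∈ s, f a + κ := by
  induction s using Finset.induction_on with
  | empty => exact ⟨∅, subset_rfl, by simp⟩
  | insert a s ha ih =>
    obtain ⟨T, hTs, h₁, h₂⟩ := ih fun b hb ↦ hf b (mem_insert_of_mem hb)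
    have hfa := hf a (mem_insert_self a s)
    rw [sum_insert ha]
    -- put `a` on the lighter side
    by_cases hT : 2 * ∑ b ∈ T, f b ≤ ∑ b ∈ s, f b
    · refine ⟨insert a T, insert_subset_insert a hTs, ?_⟩
      rw [sum_insert (fun h ↦ ha (hTs h))]
      omega
    · exact ⟨T, hTs.trans (subset_insert a s), by omega, by omega⟩

lemma SimpleGraph.exists_balanced_separation {V : Type*} [Fintype V] (G : SimpleGraph V) {κ : ℕ}
    (hκ : ∀ v, Nat.card {w // G.Reachable v w} ≤ κ) :
    ∃ X Y : Finset V, (∀ x ∈ X, ∀ y ∈ Y, ¬ G.Adj x y) ∧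
      Fintype.card V ≤ 2 * #X + κ ∧ Fintype.card V ≤ 2 * #Y + κ := by
  classical
  set f : G.ConnectedComponent → ℕ := fun C ↦ #{v | G.connectedComponentMk v = C}
  have hf : ∀ C ∈ (univ : Finset G.ConnectedComponent), f C ≤ κ := by
    refine ConnectedComponent.ind fun v _ ↦ ?_
    calc f (G.connectedComponentMk v) = Nat.card {w // G.Reachable v w} := by
          simp [f, Nat.card_eq_fintype_card, Fintype.card_subtype, ConnectedComponent.eq,
            reachable_comm]
      _ ≤ κ := hκ v
  obtain ⟨T, -, h₁, h₂⟩ := exists_subset_sum_balanced univ f hf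
  have hT : ∑ C ∈ T, f C = #{v | G.connectedComponentMk v ∈ T} :=
    sum_card_fiberwise_eq_card_filter _ _ _
  have huniv : ∑ C, f C = Fintype.card V := by
    simpa using sum_card_fiberwise_eq_card_filter univ univ G.connectedComponentMk
  have hsplit := card_filter_add_card_filter_not (s := univ)
    (fun v ↦ G.connectedComponentMk v ∈ T)
  rw [card_univ] at hsplit
  refine ⟨univ.filter (G.connectedComponentMk · ∈ T), univ.filter (G.connectedComponentMk · ∉ T),
    fun x hx y hy hxy ↦ ?_, by omega, by omega⟩
  simp only [mem_filter, mem_univ, true_and] at hx hy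
  exact hy (ConnectedComponent.connectedComponentMk_eq_of_adj hxy ▸ hx)

lemma SimpleGraph.pos_of_adjMatrix_mulVec_eq_smul {V : Type*} [Fintype V] (G : SimpleGraph V)
    [DecidableRel G.Adj] {a b : V} (hab : G.Adj a b) {ν : V → ℝ} (hν : ∀ i, 0 < ν i) {μ : ℝ}
    (h : G.adjMatrix ℝ *ᵥ ν = μ • ν) : 0 < μ := by
  have ha := congrFun h a
  rw [adjMatrix_mulVec_apply, Pi.smul_apply, smul_eq_mul] at ha
  have hb : ν b ≤ ∑ u ∈ G.neighborFinset a, ν u :=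
    single_le_sum (fun u _ ↦ (hν u).le) ((G.mem_neighborFinset a b).mpr hab)
  exact (mul_pos_iff_of_pos_right (hν a)).mp (ha ▸ (hν b).trans_le hb)

lemma card_reachable_le_maxCompSize {n : ℕ} (G : SimpleGraph (Fin n)) (S : Finset (Fin n))
    (v : {x : Fin n | x ∉ S}) :
    Nat.card {w // (G.induce {x | x ∉ S}).Reachable v w} ≤ maxCompSize G S :=
  le_csSup ⟨_, by rintro k ⟨v, rfl⟩; exact Finite.card_subtype_le _⟩ ⟨v, rfl⟩

lemma exists_nonadjacent_of_maxCompSize {n : ℕ} (G : SimpleGraph (Fin n)) (S : Finset (Fin n)) :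
    ∃ X Y : Finset (Fin n), (∀ x ∈ X, ∀ y ∈ Y, ¬ G.Adj x y) ∧
      n ≤ #S + 2 * #X + maxCompSize G S ∧ n ≤ #S + 2 * #Y + maxCompSize G S := by
  classical
  obtain ⟨X, Y, hXY, hX, hY⟩ :=
    (G.induce {x | x ∉ S}).exists_balanced_separation (card_reachable_le_maxCompSize G S)
  have hcard : Fintype.card {x : Fin n | x ∉ S} = n - #S := by
    simp [filter_not, card_sdiff]
  have hS : #S ≤ n := (card_le_univ S).trans_eq (Fintype.card_fin n)
  refine ⟨X.map (Function.Embedding.subtype _), Y.map (Function.Embedding.subtype _), ?_, ?_, ?_⟩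
  · simp only [mem_map, Function.Embedding.coe_subtype]
    rintro _ ⟨x, hx, rfl⟩ _ ⟨y, hy, rfl⟩
    exact hXY x hx y hy
  · rw [card_map]; omega
  · rw [card_map]; omega

lemma le_vertexIntegrity {n : ℕ} (G : SimpleGraph (Fin n)) {r : ℝ}
    (h : ∀ S : Finset (Fin n), r ≤ #S + maxCompSize G S) : r ≤ vertexIntegrity G := by
  obtain ⟨S, hS⟩ := Nat.sInf_mem (s := {m | ∃ S : Finset (Fin n), m = #S + maxCompSize G S})
    ⟨_, ∅, rfl⟩
  rw [vertexIntegrity, hS]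
  exact_mod_cast h S

lemma sub_two_mul_le_vertexIntegrity {n : ℕ} (G : SimpleGraph (Fin n)) {x : ℝ}
    (hx : ∀ X Y : Finset (Fin n), (∀ a ∈ X, ∀ b ∈ Y, ¬ G.Adj a b) → min (#X : ℝ) #Y ≤ x) :
    n - 2 * x ≤ vertexIntegrity G := by
  refine le_vertexIntegrity G fun S ↦ ?_
  obtain ⟨X, Y, hXY, hX, hY⟩ := exists_nonadjacent_of_maxCompSize G S
  have hX' : (n : ℝ) ≤ #S + 2 * #X + maxCompSize G S := by exact_mod_cast hX
  have hY' : (n : ℝ) ≤ #S + 2 * #Y + maxCompSize G S := by exact_mod_cast hY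
  rcases min_le_iff.mp (hx X Y hXY) with h | h <;> linarith

/-- **Perron spectral lower bound on the vertex integrity**
(Theorem 27(ii) of the paper). -/
theorem vertex_integrity_perron_bound {n : ℕ} (hn : 2 ≤ n)
    (G : SimpleGraph (Fin n)) [DecidableRel G.Adj] (hG : G.Connected)
    (A : Matrix (Fin n) (Fin n) ℝ) (hA : A = G.adjMatrix ℝ)
    (hAH : A.IsHermitian)
    (lam : Fin n → ℝ) (hmono : Antitone lam)
    (heig : ∃ e : Fin n ≃ Fin n, ∀ i, lam i = hAH.eigenvalues (e i))
    (ν : Fin n → ℝ) (hνpos : ∀ i, 0 < ν i) (hνnorm : ∑ i, ν i ^ 2 = 1)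
    (hνeig : A *ᵥ ν = lam ⟨0, by omega⟩ • ν)
    (lamAbs : ℝ)
    (hlamAbs : lamAbs = max |lam ⟨1, by omega⟩| |lam ⟨n - 1, by omega⟩|)
    (νmin : ℝ) (hνmin : IsLeast (Set.range ν) νmin) :
    (vertexIntegrity G : ℝ) ≥
      n * (1 - 2 * lamAbs / (n * (lamAbs + lam ⟨0, by omega⟩) * νmin ^ 2)) := by
  obtain ⟨e, he⟩ := heig
  have hν1 : ν ⬝ᵥ ν = 1 := by simpa [dotProduct, sq] using hνnorm
  have hνc : ∀ i, νmin ≤ ν i := fun i ↦ hνmin.2 ⟨i, rfl⟩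
  have hc : 0 < νmin := by
    obtain ⟨i, hi⟩ := hνmin.1
    exact hi ▸ hνpos i
  have hL : 0 ≤ lamAbs := hlamAbs ▸ le_max_of_le_left (abs_nonneg _)
  have : Nontrivial (Fin n) := Fin.nontrivial_iff_two_le.mpr hn
  obtain ⟨b, hab⟩ := hG.preconnected.exists_adj_of_nontrivial (⟨0, by omega⟩ : Fin n)
  have hμ := G.pos_of_adjMatrix_mulVec_eq_smul hab hνpos (hA ▸ hνeig)
  have hgap : ∀ i ≠ e ⟨0, by omega⟩, |hAH.eigenvalues i| ≤ lamAbs := by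
    intro i hi
    rw [← e.apply_symm_apply i, ← he, hlamAbs]
    exact abs_le_max_abs_of_antitone hmono (Nat.pos_of_ne_zero fun h ↦ hi (by
      rw [← e.apply_symm_apply i]; exact congrArg e (Fin.ext h)))
  calc (n : ℝ) * (1 - 2 * lamAbs / (n * (lamAbs + lam ⟨0, by omega⟩) * νmin ^ 2))
      = n - 2 * (lamAbs / ((lamAbs + lam ⟨0, by omega⟩) * νmin ^ 2)) := by field_simp
    _ ≤ (vertexIntegrity G : ℝ) := sub_two_mul_le_vertexIntegrity G fun X Y hXY ↦
      (Real.min_le_sqrt_mul (by positivity) (by positivity)).trans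
        (hAH.sqrt_card_mul_card_le_of_block_eq_zero hL hμ hc hνeig hν1 hνc (he _).symm hgap
          fun i hi j hj ↦ by simp [hA, hXY i hi j hj])
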